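/- There exists a real constant (namely the Euler–Mascheroni constant γ) such that the partial sums of the harmonic series satisfy H_n = γ + log(n + 1/2) + 1/(24n²) + O(1/n³) as n → ∞; precisely, there exist constants A > 0 and N such that for all n ≥ N, |H_n − γ − log(n + 1/2) − 1/(24n²)| ≤ A/n³. -/

import Mathlib

/-!
With `x = 1 / (2n + 2)` the increment of `log (n + 1/2)` is
`log ((1 + x) / (1 - x)) = 2x + 2x³/3 + O(x⁵)`, and `2x = 1/(n+1)`, `2x³/3 = 1/(12 (n+1)³)`
is the increment of `H n + 1/(24 n²)` up to `O(1/n⁴)`. So the error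
`H n - log (n + 1/2) - 1/(24 n²)` moves by at most `1/(3n⁴) ≤ 1/n³ - 1/(n+1)³` per step:
it converges to some `γ` and stays within `1/n³` of it.
-/

open Finset

noncomputable def H (n : ℕ) : ℝ := ∑ j ∈ Finset.Icc 1 n, (1 : ℝ) / j

open Filter Topology

namespace Real

theorem le_log_one_add_sub_log_one_sub {x : ℝ} (hx₀ : 0 ≤ x) (hx₁ : x < 1) :
    2 * x + 2 / 3 * x ^ 3 ≤ log (1 + x) - log (1 - x) := by
  have hs := hasSum_log_sub_log_of_abs_lt_one (abs_lt.2 ⟨by linarith, hx₁⟩)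
  have := sum_le_hasSum (range 2) (fun k _ ↦ by positivity) hs
  norm_num [sum_range_succ] at this
  linarith

theorem log_one_add_sub_log_one_sub_le {x : ℝ} (hx₀ : 0 ≤ x) (hx₁ : x < 1) :
    log (1 + x) - log (1 - x) ≤ 2 * x + 2 / 3 * x ^ 3 + 2 * x ^ 5 / (1 - x ^ 2) := by
  have hs := (hasSum_nat_add_iff' 2).2
    (hasSum_log_sub_log_of_abs_lt_one (abs_lt.2 ⟨by linarith, hx₁⟩))
  have hgeom := (hasSum_geometric_of_lt_one (sq_nonneg x) (by nlinarith)).mul_left (2 * x ^ 5)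
  have := hasSum_le (fun k ↦ ?_) hs hgeom
  · norm_num [sum_range_succ] at this
    rw [← div_eq_mul_inv] at this
    linarith
  · have hk : 1 / (2 * ((k + 2 : ℕ) : ℝ) + 1) ≤ 1 := by
      rw [div_le_one (by positivity)]; push_cast; linarith [k.cast_nonneg (α := ℝ)]
    calc 2 * (1 / (2 * ((k + 2 : ℕ) : ℝ) + 1)) * x ^ (2 * (k + 2) + 1)
        ≤ 2 * 1 * x ^ (2 * (k + 2) + 1) := by gcongr
      _ = 2 * x ^ 5 * (x ^ 2) ^ k := by ring

theorem log_add_half_sub_log_sub_half {a : ℝ} (ha : 1 / 2 < a) :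
    log (a + 1 / 2) - log (a - 1 / 2) = log (1 + 1 / (2 * a)) - log (1 - 1 / (2 * a)) := by
  have ha₀ : a ≠ 0 := by positivity
  rw [show 1 + 1 / (2 * a) = (a + 1 / 2) / a by field_simp,
    show 1 - 1 / (2 * a) = (a - 1 / 2) / a by field_simp,
    log_div (by positivity) ha₀, log_div (by linarith) ha₀]
  ring

end Real

theorem abs_sub_le_sub_of_abs_sub_succ_le {u v : ℕ → ℝ} {n₀ : ℕ}
    (h : ∀ k ≥ n₀, |u (k + 1) - u k| ≤ v k - v (k + 1)) {n m : ℕ} (hn : n₀ ≤ n)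
    (hnm : n ≤ m) :
    |u m - u n| ≤ v n - v m := by
  induction m, hnm using Nat.le_induction with
  | base => simp
  | succ m hnm ih =>
    calc |u (m + 1) - u n| ≤ |u (m + 1) - u m| + |u m - u n| := abs_sub_le _ _ _
      _ ≤ v n - v (m + 1) := by linarith [h m (hn.trans hnm)]

theorem exists_tendsto_abs_sub_le_of_abs_sub_succ_le {u v : ℕ → ℝ} {n₀ : ℕ}
    (hv : Tendsto v atTop (𝓝 0)) (h : ∀ k ≥ n₀, |u (k + 1) - u k| ≤ v k - v (k + 1)) :
    ∃ L, Tendsto u atTop (𝓝 L) ∧ ∀ n ≥ n₀, |u n - L| ≤ v n := by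
  have hu : CauchySeq u := by
    refine Metric.cauchySeq_iff'.2 fun ε hε ↦ ?_
    obtain ⟨N, hN⟩ := eventually_atTop.1
      ((hv.eventually (Metric.ball_mem_nhds 0 (half_pos hε))).and (eventually_ge_atTop n₀))
    refine ⟨N, fun n hn ↦ ?_⟩
    have hvN := (hN N le_rfl).1
    have hvn := (hN n hn).1
    simp only [Real.dist_eq, sub_zero, abs_lt] at hvN hvn
    rw [Real.dist_eq]
    linarith [abs_sub_le_sub_of_abs_sub_succ_le h (hN N le_rfl).2 hn]
  obtain ⟨L, hL⟩ := cauchySeq_tendsto_of_complete hu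
  refine ⟨L, hL, fun n hn ↦ ?_⟩
  rw [abs_sub_comm]
  refine le_of_tendsto_of_tendsto (hL.sub_const (u n)).abs
    (by simpa using hv.const_sub (v n)) ?_
  filter_upwards [eventually_ge_atTop n] with m hm
  exact abs_sub_le_sub_of_abs_sub_succ_le h hn hm

theorem H_succ (n : ℕ) : H (n + 1) = H n + 1 / (n + 1) := by
  rw [H, sum_Icc_succ_top (by omega), H]
  push_cast
  rfl

noncomputable def harmonicError (n : ℕ) : ℝ :=
  H n - Real.log (n + 1 / 2) - 1 / (24 * (n : ℝ) ^ 2)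

theorem abs_harmonicError_succ_sub_le {n : ℕ} (hn : 1 ≤ n) :
    |harmonicError (n + 1) - harmonicError n| ≤ 1 / (3 * (n : ℝ) ^ 4) := by
  have hn' : (1 : ℝ) ≤ n := by exact_mod_cast hn
  have hlog := Real.log_add_half_sub_log_sub_half (a := n + 1) (by linarith)
  rw [show (n : ℝ) + 1 - 1 / 2 = n + 1 / 2 by ring] at hlog
  set x : ℝ := 1 / (2 * (n + 1)) with hx
  have hx₀ : 0 ≤ x := by positivity
  have hx₁ : x ≤ 1 / 4 := by
    rw [hx, div_le_div_iff₀ (by positivity) (by norm_num)]; linarith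
  have hlow := Real.le_log_one_add_sub_log_one_sub hx₀ (by linarith)
  have hupp := Real.log_one_add_sub_log_one_sub_le hx₀ (by linarith)
  rw [← hlog] at hlow hupp
  -- `(3n + 1) / (24 n² (n + 1)³) = 1 / (24 n²) - 1 / (24 (n + 1)²) - 1 / (12 (n + 1)³)`
  have hdiff : harmonicError (n + 1) - harmonicError n =
      (3 * n + 1) / (24 * n ^ 2 * (n + 1) ^ 3) -
        (Real.log (n + 1 + 1 / 2) - Real.log (n + 1 / 2) - (2 * x + 2 / 3 * x ^ 3)) := by
    rw [harmonicError, harmonicError, H_succ, hx]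
    push_cast
    field_simp
    ring
  have hmain : (3 * n + 1) / (24 * n ^ 2 * (n + 1) ^ 3) ≤ 1 / (3 * (n : ℝ) ^ 4) := by
    rw [div_le_div_iff₀ (by positivity) (by positivity)]
    nlinarith [pow_le_pow_left₀ zero_le_one hn' 3, pow_le_pow_left₀ zero_le_one hn' 4]
  have htail : 2 * x ^ 5 / (1 - x ^ 2) ≤ 1 / (3 * (n : ℝ) ^ 4) := calc
    2 * x ^ 5 / (1 - x ^ 2) ≤ x ^ 4 := by
      rw [div_le_iff₀ (by nlinarith)]; nlinarith [pow_nonneg hx₀ 4, pow_nonneg hx₀ 5]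
    _ = 1 / (16 * ((n : ℝ) + 1) ^ 4) := by rw [hx]; field_simp; ring
    _ ≤ 1 / (3 * (n : ℝ) ^ 4) := by gcongr <;> linarith
  rw [hdiff, abs_le]
  constructor <;> linarith [div_nonneg (by positivity : (0 : ℝ) ≤ 3 * n + 1)
    (by positivity : (0 : ℝ) ≤ 24 * n ^ 2 * (n + 1) ^ 3)]

theorem one_div_three_mul_pow_four_le_sub {x : ℝ} (hx : 1 ≤ x) :
    1 / (3 * x ^ 4) ≤ 1 / x ^ 3 - 1 / (x + 1) ^ 3 := by
  rw [div_sub_div _ _ (by positivity) (by positivity),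
    div_le_div_iff₀ (by positivity) (by positivity)]
  nlinarith [pow_le_pow_left₀ zero_le_one hx 5, pow_le_pow_left₀ zero_le_one hx 6]

theorem harmonic_expansion :
    ∃ γ : ℝ, ∃ A > (0 : ℝ), ∃ N : ℕ, ∀ n : ℕ, n ≥ N →
      |H n - γ - Real.log ((n : ℝ) + 1/2) - 1 / (24 * (n : ℝ)^2)| ≤ A / (n : ℝ)^3 := by
  have hv : Tendsto (fun n : ℕ ↦ 1 / (n : ℝ) ^ 3) atTop (𝓝 0) := by
    simpa [Function.comp_def, Pi.inv_def] using
      ((tendsto_pow_atTop three_ne_zero).comp tendsto_natCast_atTop_atTop).inv_tendsto_atTop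
  obtain ⟨γ, -, hγ⟩ :=
    exists_tendsto_abs_sub_le_of_abs_sub_succ_le (u := harmonicError) (n₀ := 1) hv fun k hk ↦ by
      push_cast
      exact (abs_harmonicError_succ_sub_le hk).trans
        (one_div_three_mul_pow_four_le_sub (by exact_mod_cast hk))
  refine ⟨γ, 1, one_pos, 1, fun n hn ↦ ?_⟩
  convert hγ n hn using 2
  rw [harmonicError]; ring
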